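/- arXiv:1003.1984 — 3 statements merged into one kernel-verified Lean document; each statement's English description precedes it below -/
import Mathlib

section
/- Let F be a finite field with char F ≠ 2 and |F| = q. Then the number of 3×3 matrices over F with zero permanent equals the number of 3×3 matrices over F with zero determinant minus q²(q−1)⁵, i.e. |P_3(F)| = |D_3(F)| − q²(q−1)⁵. -/
/-!
Expanding along the last row, `per A = c(A₀, A₁) ⬝ A₂` and `det A = (A₀ × A₁) ⬝ A₂`, where
`c(a, b) = (a₁b₂ + a₂b₁, a₀b₂ + a₂b₀, a₀b₁ + a₁b₀)` is a permanental analogue of the cross product.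
Given the first two rows, the third row ranges over `q³` vectors if the cofactor vector vanishes
and over a plane of `q²` vectors otherwise, so both counts equal `q⁸ + (q³ - q²) N`, where `N`
counts the pairs `(a, b)` with vanishing cofactor vector.

For `a₀ = 0` the two kinds of pairs correspond by negating `b₁`. For `a₀ ≠ 0`, `a × b = 0` means
`b = t a`, whereas (as `2 ≠ 0`) `c(a, b) = 0` means `b = t (a₀, -a₁, -a₂)` with `a₁ a₂ t = 0`.
So the two values of `N` differ by the `(q - 1)⁴` choices of `(a, t)` with all entries nonzero,
and `(q³ - q²)(q - 1)⁴ = q²(q - 1)⁵`.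
-/

open Matrix

theorem vec3_ext_iff {α : Type*} {v w : Fin 3 → α} :
    v = w ↔ v 0 = w 0 ∧ v 1 = w 1 ∧ v 2 = w 2 := by
  simp [funext_iff, Fin.forall_fin_succ]

section CrossProducts

variable {R : Type*} [CommRing R]

theorem permanent_fin_three (A : Matrix (Fin 3) (Fin 3) R) :
    A.permanent = A 0 0 * A 1 1 * A 2 2 + A 0 0 * A 1 2 * A 2 1 + A 0 1 * A 1 0 * A 2 2
      + A 0 1 * A 1 2 * A 2 0 + A 0 2 * A 1 0 * A 2 1 + A 0 2 * A 1 1 * A 2 0 := by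
  simp only [permanent, ← Equiv.Perm.decomposeFin.symm.sum_comp, Fintype.sum_prod_type,
    Fin.sum_univ_succ, Fin.prod_univ_succ, Fintype.sum_unique, Fin.prod_univ_zero,
    Equiv.Perm.decomposeFin_symm_apply_zero, Equiv.Perm.decomposeFin_symm_apply_succ]
  simp only [Fin.isValue, Equiv.swap_self, Fin.succ_zero_eq_one, Equiv.refl_apply,
    Fin.default_eq_zero, Fin.succ_one_eq_two, mul_one, Equiv.swap_apply_right,
    Equiv.swap_apply_def, Fin.reduceEq, ↓reduceIte, one_ne_zero]
  ring

def permCross (a b : Fin 3 → R) : Fin 3 → R :=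
  ![a 1 * b 2 + a 2 * b 1, a 0 * b 2 + a 2 * b 0, a 0 * b 1 + a 1 * b 0]

theorem permanent_eq_permCross_dotProduct (A : Matrix (Fin 3) (Fin 3) R) :
    A.permanent = permCross (A 0) (A 1) ⬝ᵥ A 2 := by
  simp only [permanent_fin_three, permCross, dotProduct, Fin.sum_univ_three, cons_val_zero,
    cons_val_one, cons_val]
  ring

theorem det_eq_cross_dotProduct (A : Matrix (Fin 3) (Fin 3) R) :
    A.det = A 0 ⨯₃ A 1 ⬝ᵥ A 2 := by
  simp only [det_fin_three, cross_apply, dotProduct, Fin.sum_univ_three, cons_val_zero,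
    cons_val_one, cons_val]
  ring

theorem permCross_eq_zero_iff_cross_eq_zero_of_head_eq_zero {a b : Fin 3 → R} (ha : a 0 = 0) :
    permCross a b = 0 ↔ a ⨯₃ ![b 0, -b 1, b 2] = 0 := by
  simp [permCross, cross_apply, ha]

variable {K : Type*} [Field K]

theorem cross_eq_zero_iff_of_head_ne_zero {a b : Fin 3 → K} (ha : a 0 ≠ 0) :
    a ⨯₃ b = 0 ↔ b = (b 0 / a 0) • a := by
  refine ⟨fun h => ?_, fun h => by rw [h, map_smul, cross_self, smul_zero]⟩
  simp only [vec3_ext_iff, cross_apply, cons_val_zero, cons_val_one, cons_val, Pi.zero_apply] at h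
  obtain ⟨-, h₂, h₁⟩ := h
  simp only [vec3_ext_iff, Pi.smul_apply, smul_eq_mul]
  refine ⟨by field_simp, ?_, ?_⟩ <;> field_simp
  · linear_combination h₁
  · linear_combination -h₂

theorem permCross_eq_zero_iff_of_head_ne_zero {a b : Fin 3 → K} (h2 : (2 : K) ≠ 0)
    (ha : a 0 ≠ 0) :
    permCross a b = 0 ↔ b = (b 0 / a 0) • ![a 0, -a 1, -a 2] ∧ a 1 * a 2 * b 0 = 0 := by
  simp only [vec3_ext_iff, permCross, Pi.smul_apply, smul_eq_mul, cons_val_zero, cons_val_one,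
    cons_val, Pi.zero_apply]
  constructor
  · rintro ⟨h₀, h₁, h₂⟩
    refine ⟨⟨by field_simp, ?_, ?_⟩, ?_⟩
    · field_simp
      linear_combination h₂
    · field_simp
      linear_combination h₁
    · have h2b : 2 * (a 1 * a 2 * b 0) = 0 := by
        linear_combination (-(a 0)) * h₀ + a 1 * h₁ + a 2 * h₂
      simpa [h2] using h2b
  · rintro ⟨⟨-, hb₁, hb₂⟩, h⟩
    rw [hb₁, hb₂]
    exact ⟨by linear_combination (-2 / a 0) * h, by field_simp; ring, by field_simp; ring⟩

end CrossProducts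

section Counting

theorem natCard_subtype_and_add_natCard_subtype_and_not {α : Type*} [Finite α] (P Q : α → Prop) :
    Nat.card {x // P x ∧ Q x} + Nat.card {x // P x ∧ ¬Q x} = Nat.card {x // P x} := by
  classical
  rw [← Nat.card_sum]
  exact Nat.card_congr <| ((Equiv.subtypeSubtypeEquivSubtypeInter P Q).sumCongr
    (Equiv.subtypeSubtypeEquivSubtypeInter P (¬Q ·))).symm.trans
      (Equiv.sumCompl fun y : {x // P x} => Q y)

variable {F : Type*} [Field F]

theorem natCard_subtype_ne_zero : Nat.card {u : F // u ≠ 0} = Nat.card F - 1 := by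
  rw [← Nat.card_congr unitsEquivNeZero, Nat.card_units]

theorem natCard_subtype_forall_ne_zero (ι : Type*) [Fintype ι] :
    Nat.card {x : ι → F // ∀ i, x i ≠ 0} = (Nat.card F - 1) ^ Fintype.card ι := by
  rw [Nat.card_congr (Equiv.subtypePiEquivPi (p := fun _ (u : F) => u ≠ 0)), Nat.card_pi,
    Finset.prod_const, Finset.card_univ, natCard_subtype_ne_zero]

theorem natCard_dotProduct_eq_zero_of_ne_zero {ι : Type*} [Fintype ι] {v : ι → F} (hv : v ≠ 0) :
    Nat.card {x : ι → F // v ⬝ᵥ x = 0} = Nat.card F ^ (Fintype.card ι - 1) := by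
  classical
  have hrank := Module.Dual.finrank_ker_add_one_of_ne_zero
    (show dotProductEquiv F ι v ≠ 0 by simpa using hv)
  rw [Module.finrank_fintype_fun_eq_card] at hrank
  rw [← hrank, Nat.add_sub_cancel, ← Module.natCard_eq_pow_finrank (K := F)]
  rfl

theorem natCard_dotProduct_eq_zero_prod [Finite F] {α ι : Type*} [Finite α] [Fintype ι]
    (c : α → ι → F) :
    (Nat.card {p : α × (ι → F) // c p.1 ⬝ᵥ p.2 = 0} : ℤ) =
      Nat.card F ^ (Fintype.card ι - 1) * Nat.card α +
        (Nat.card F ^ Fintype.card ι - Nat.card F ^ (Fintype.card ι - 1)) *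
          Nat.card {a // c a = 0} := by
  classical
  have := Fintype.ofFinite α
  have hfiber (a : α) : (Nat.card {x : ι → F // c a ⬝ᵥ x = 0} : ℤ) =
      Nat.card F ^ (Fintype.card ι - 1) +
        if c a = 0 then (Nat.card F ^ Fintype.card ι - Nat.card F ^ (Fintype.card ι - 1) : ℤ)
        else 0 := by
    split_ifs with ha
    · simp [ha, Nat.card_fun]
    · simp [natCard_dotProduct_eq_zero_of_ne_zero ha]
  rw [Nat.card_congr (Equiv.subtypeProdEquivSigmaSubtype fun a x => c a ⬝ᵥ x = 0),
    Nat.card_sigma, Nat.cast_sum]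
  simp only [hfiber, Finset.sum_add_distrib, Finset.sum_const, Finset.sum_ite, nsmul_eq_mul,
    Finset.card_univ, ← Fintype.card_subtype, Nat.card_eq_fintype_card]
  ring

def Matrix.finThreeRowsEquiv (R : Type*) :
    Matrix (Fin 3) (Fin 3) R ≃ ((Fin 3 → R) × (Fin 3 → R)) × (Fin 3 → R) where
  toFun A := ((A 0, A 1), A 2)
  invFun p := of ![p.1.1, p.1.2, p.2]
  left_inv A := by ext i j; fin_cases i <;> rfl
  right_inv _ := rfl

theorem natCard_matrix_fin_three_eq_zero [Finite F] (f : Matrix (Fin 3) (Fin 3) F → F)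
    (c : (Fin 3 → F) → (Fin 3 → F) → Fin 3 → F) (hf : ∀ A, f A = c (A 0) (A 1) ⬝ᵥ A 2) :
    (Nat.card {A // f A = 0} : ℤ) = Nat.card F ^ 8 +
      (Nat.card F ^ 3 - Nat.card F ^ 2) *
        Nat.card {p : (Fin 3 → F) × (Fin 3 → F) // c p.1 p.2 = 0} := by
  rw [Nat.card_congr <| (finThreeRowsEquiv F).subtypeEquiv
      (q := fun p => c p.1.1 p.1.2 ⬝ᵥ p.2 = 0) fun A => by rw [hf]; rfl,
    natCard_dotProduct_eq_zero_prod fun p : (Fin 3 → F) × (Fin 3 → F) => c p.1 p.2,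
    Nat.card_prod, Nat.card_fun, Nat.card_fin, Fintype.card_fin]
  push_cast
  ring

end Counting

section PairCounts

variable {K : Type*} [Field K]

def permCrossKerEquivOfHeadEqZero :
    {p : (Fin 3 → K) × (Fin 3 → K) // permCross p.1 p.2 = 0 ∧ p.1 0 = 0} ≃
      {p : (Fin 3 → K) × (Fin 3 → K) // p.1 ⨯₃ p.2 = 0 ∧ p.1 0 = 0} :=
  let negMiddle : (Fin 3 → K) ≃ (Fin 3 → K) :=
    Function.Involutive.toPerm (fun b => ![b 0, -b 1, b 2]) fun b =>
      vec3_ext_iff.2 ⟨rfl, neg_neg (b 1), rfl⟩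
  (Equiv.prodCongr (Equiv.refl _) negMiddle).subtypeEquiv fun _ =>
    and_congr_left permCross_eq_zero_iff_cross_eq_zero_of_head_eq_zero

def crossKerEquivOfHeadNeZero :
    {p : (Fin 3 → K) × (Fin 3 → K) // p.1 ⨯₃ p.2 = 0 ∧ p.1 0 ≠ 0} ≃
      {w : (Fin 3 → K) × K // w.1 0 ≠ 0} where
  toFun p := ⟨(p.1.1, p.1.2 0 / p.1.1 0), p.2.2⟩
  invFun w := ⟨(w.1.1, w.1.2 • w.1.1), by
    refine ⟨(cross_eq_zero_iff_of_head_ne_zero w.2).2 ?_, w.2⟩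
    simp only [Pi.smul_apply, smul_eq_mul, mul_div_cancel_right₀ _ w.2]⟩
  left_inv p := Subtype.ext <| Prod.ext rfl
    ((cross_eq_zero_iff_of_head_ne_zero p.2.2).1 p.2.1).symm
  right_inv w := Subtype.ext <| Prod.ext rfl <| mul_div_cancel_right₀ _ w.2

def permCrossKerEquivOfHeadNeZero (h2 : (2 : K) ≠ 0) :
    {p : (Fin 3 → K) × (Fin 3 → K) // permCross p.1 p.2 = 0 ∧ p.1 0 ≠ 0} ≃
      {w : (Fin 3 → K) × K // w.1 0 ≠ 0 ∧ w.1 1 * w.1 2 * w.2 = 0} where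
  toFun p := ⟨(p.1.1, p.1.2 0 / p.1.1 0), p.2.2, by
    rw [← mul_div_assoc, ((permCross_eq_zero_iff_of_head_ne_zero h2 p.2.2).1 p.2.1).2, zero_div]⟩
  invFun w := ⟨(w.1.1, w.1.2 • ![w.1.1 0, -w.1.1 1, -w.1.1 2]), by
    refine ⟨(permCross_eq_zero_iff_of_head_ne_zero h2 w.2.1).2 ⟨?_, ?_⟩, w.2.1⟩
    · simp [mul_div_cancel_right₀ _ w.2.1]
    · simp [← mul_assoc, w.2.2]⟩
  left_inv p := Subtype.ext <| Prod.ext rfl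
    ((permCross_eq_zero_iff_of_head_ne_zero h2 p.2.2).1 p.2.1).1.symm
  right_inv w := Subtype.ext <| Prod.ext rfl <| mul_div_cancel_right₀ _ w.2.1

theorem natCard_subtype_head_ne_zero_and_not_mul_eq_zero :
    Nat.card {w : (Fin 3 → K) × K // w.1 0 ≠ 0 ∧ ¬w.1 1 * w.1 2 * w.2 = 0} =
      (Nat.card K - 1) ^ 4 := by
  have hiff (w : (Fin 3 → K) × K) :
      w.1 0 ≠ 0 ∧ ¬w.1 1 * w.1 2 * w.2 = 0 ↔ (∀ i, w.1 i ≠ 0) ∧ w.2 ≠ 0 := by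
    simp only [Fin.forall_fin_succ, IsEmpty.forall_iff, and_true, Fin.succ_zero_eq_one,
      Fin.succ_one_eq_two, mul_eq_zero]
    tauto
  rw [Nat.card_congr <| (Equiv.subtypeEquivRight hiff).trans
      (Equiv.subtypeProdEquivProd (p := fun a : Fin 3 → K => ∀ i, a i ≠ 0) (q := (· ≠ 0))),
    Nat.card_prod, natCard_subtype_forall_ne_zero, natCard_subtype_ne_zero, Fintype.card_fin]
  ring

theorem natCard_cross_eq_zero [Finite K] (h2 : (2 : K) ≠ 0) :
    Nat.card {p : (Fin 3 → K) × (Fin 3 → K) // p.1 ⨯₃ p.2 = 0} =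
      Nat.card {p : (Fin 3 → K) × (Fin 3 → K) // permCross p.1 p.2 = 0} +
        (Nat.card K - 1) ^ 4 := by
  rw [← natCard_subtype_and_add_natCard_subtype_and_not _
      fun p : (Fin 3 → K) × (Fin 3 → K) => p.1 0 = 0,
    ← natCard_subtype_and_add_natCard_subtype_and_not
      (fun p : (Fin 3 → K) × (Fin 3 → K) => permCross p.1 p.2 = 0) fun p => p.1 0 = 0,
    ← Nat.card_congr permCrossKerEquivOfHeadEqZero, Nat.card_congr crossKerEquivOfHeadNeZero,
    Nat.card_congr (permCrossKerEquivOfHeadNeZero h2),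
    ← natCard_subtype_and_add_natCard_subtype_and_not _
      fun w : (Fin 3 → K) × K => w.1 1 * w.1 2 * w.2 = 0,
    natCard_subtype_head_ne_zero_and_not_mul_eq_zero]
  ring

end PairCounts

/-- For a finite field `F` with `char F ≠ 2` and `|F| = q`,
`|P₃(F)| = |D₃(F)| − q²(q−1)⁵`, where `P₃(F)` is the set of `3×3` matrices with zero
permanent and `D₃(F)` the set of `3×3` matrices with zero determinant. -/
theorem card_permanent_zero_three_eq (F : Type) [Field F] [Fintype F]
    (hch : ringChar F ≠ 2) :
    (Nat.card {A : Matrix (Fin 3) (Fin 3) F // A.permanent = 0} : ℤ) =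
      (Nat.card {A : Matrix (Fin 3) (Fin 3) F // A.det = 0} : ℤ)
        - (Fintype.card F : ℤ) ^ 2 * ((Fintype.card F : ℤ) - 1) ^ 5 := by
  rw [natCard_matrix_fin_three_eq_zero _ _ permanent_eq_permCross_dotProduct,
    natCard_matrix_fin_three_eq_zero _ (fun a b => a ⨯₃ b) det_eq_cross_dotProduct,
    natCard_cross_eq_zero (Ring.two_ne_zero hch), ← Nat.card_eq_fintype_card]
  push_cast [Nat.cast_sub Nat.card_pos]
  ring
end

section
/- Let F be a finite field with |F| = q and let n ≥ 2. Then |P_n(F)| = (q^{(n−1)²} − |P_{n−1}(F)|) q^{2(n−1)} + q Σ_{r=0}^{n−1} |N^{(r)}_{n−1}(F)| · |V^{(r)}_{n−1}(F)|, where N^{(r)}_{n−1}(F) = {X ∈ M_{n−1}(F) : per X = 0 and rank(X̂) = r} and |V^{(r)}_{n−1}(F)| = q^{2(n−1−r)}((q^r − 1) q^{r−1} + q^r). -/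
/-- The permanental compound `X̂` of a square matrix `X`: the `(i,j)` entry is the
permanent of the submatrix of `X` obtained by deleting row `i` and column `j`. -/
def Matrix.permCompound {m : ℕ} {F : Type*} [CommRing F]
    (X : Matrix (Fin (m + 1)) (Fin (m + 1)) F) : Matrix (Fin (m + 1)) (Fin (m + 1)) F :=
  Matrix.of fun i j => (X.submatrix i.succAbove j.succAbove).permanent

/-- The cardinality `q^{2(k−r)}((qʳ − 1) q^{r−1} + qʳ)` of
`{(x,y) ∈ Fᵏ × Fᵏ : xᵀ A y = 0}` for a matrix `A` of rank `r` over a field with `q`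
elements. -/
def bilinearZeroCount (q k r : ℕ) : ℕ :=
  q ^ (2 * (k - r)) * ((q ^ r - 1) * q ^ (r - 1) + q ^ r)

/-!
Expanding the permanent of an `(n+2) × (n+2)` matrix `A` along its first row, and then every
minor along its first column, gives `per A = a · per X + yᵀ X̂ x`, where `X` is the lower-right
block, `a` the corner entry and `x`, `y` the rest of the first row and column. Count the
solutions of this equation over each `X`. If `per X ≠ 0`, every `(x, y)` determines `a`
uniquely. If `per X = 0`, `a` is free and `(x, y)` must satisfy `yᵀ X̂ x = 0`: the `q^{n+1-r}`
vectors `x` in the kernel of `X̂` (of rank `r`) leave `y` free, and any other `x` confines `y` to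
a hyperplane.
-/

open Equiv Finset Matrix

namespace Matrix

section Expansion

variable {R : Type*} [CommSemiring R] {n : ℕ}

theorem permanent_succ_column_zero (A : Matrix (Fin (n + 1)) (Fin (n + 1)) R) :
    A.permanent = ∑ i, A i 0 * (A.submatrix i.succAbove Fin.succ).permanent := by
  rw [permanent, univ_perm_fin_succ, ← univ_product_univ, sum_map, sum_product]
  refine sum_congr rfl fun i _ => ?_
  have hprod (σ : Perm (Fin n)) : ∏ k, A (Perm.decomposeFin.symm (i, σ) k) k =
      A i 0 * ∏ k, A (Equiv.swap 0 i (σ k).succ) k.succ := by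
    simp [Fin.prod_univ_succ]
  simp only [Equiv.toEmbedding_apply, hprod, ← mul_sum]
  congr 1
  change (A.submatrix (fun k => Equiv.swap 0 i k.succ) Fin.succ).permanent = _
  refine Fin.cases rfl (fun i => ?_) i
  have : A.submatrix (fun k => Equiv.swap 0 i.succ k.succ) Fin.succ =
      (A.submatrix i.succ.succAbove Fin.succ).submatrix i.cycleRange id := by
    ext a b
    simp [Fin.succAbove_cycleRange]
  rw [this, permanent_permute_cols]

theorem permanent_succ_row_zero (A : Matrix (Fin (n + 1)) (Fin (n + 1)) R) :
    A.permanent = ∑ j, A 0 j * (A.submatrix Fin.succ j.succAbove).permanent := by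
  rw [← permanent_transpose A, permanent_succ_column_zero]
  refine sum_congr rfl fun j _ => ?_
  rw [← permanent_transpose, transpose_submatrix, transpose_transpose, transpose_apply]

end Expansion

theorem permanent_eq_mul_add_dotProduct_permCompound_mulVec {R : Type*} [CommRing R] {n : ℕ}
    (A : Matrix (Fin (n + 2)) (Fin (n + 2)) R) :
    A.permanent = A 0 0 * (A.submatrix Fin.succ Fin.succ).permanent +
      (fun i => A i.succ 0) ⬝ᵥ
        ((A.submatrix Fin.succ Fin.succ).permCompound *ᵥ fun j => A 0 j.succ) := by
  rw [permanent_succ_row_zero, Fin.sum_univ_succ]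
  congr 1
  have hminor (j : Fin (n + 1)) : (A.submatrix Fin.succ j.succ.succAbove).permanent =
      ∑ i, A i.succ 0 * (A.submatrix Fin.succ Fin.succ).permCompound i j := by
    rw [permanent_succ_column_zero]
    refine sum_congr rfl fun i _ => ?_
    simp only [submatrix_apply, Fin.succ_succAbove_zero, permCompound, of_apply,
      submatrix_submatrix, Function.comp_def, Fin.succ_succAbove_succ]
  simp only [hminor, dotProduct, mulVec, mul_sum]
  rw [sum_comm]
  exact sum_congr rfl fun j _ => sum_congr rfl fun i _ => by ring

def succBlockEquiv (k : ℕ) (R : Type*) :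
    Matrix (Fin (k + 1)) (Fin (k + 1)) R ≃
      Matrix (Fin k) (Fin k) R × ((Fin k → R) × (Fin k → R)) × R where
  toFun A := (A.submatrix Fin.succ Fin.succ, (fun j => A 0 j.succ, fun i => A i.succ 0), A 0 0)
  invFun t := of (Fin.cons (Fin.cons t.2.2 t.2.1.1) fun i => Fin.cons (t.2.1.2 i) (t.1 i))
  left_inv A := by
    ext i j
    refine Fin.cases ?_ (fun i => ?_) i <;> refine Fin.cases ?_ (fun j => ?_) j <;> simp
  right_inv := by
    rintro ⟨X, ⟨x, y⟩, a⟩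
    ext <;> simp

theorem natCard_permanent_eq_zero_eq_sum {R : Type*} [CommRing R] [Fintype R] (n : ℕ) :
    Nat.card {A : Matrix (Fin (n + 2)) (Fin (n + 2)) R // A.permanent = 0} =
      ∑ X : Matrix (Fin (n + 1)) (Fin (n + 1)) R,
        Nat.card {t : ((Fin (n + 1) → R) × (Fin (n + 1) → R)) × R //
          t.2 * X.permanent + t.1.2 ⬝ᵥ (X.permCompound *ᵥ t.1.1) = 0} := by
  rw [← Nat.card_sigma]
  refine Nat.card_congr (((succBlockEquiv (n + 1) R).subtypeEquiv fun A => ?_).trans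
    (subtypeProdEquivSigmaSubtype fun (X : Matrix (Fin (n + 1)) (Fin (n + 1)) R)
      (t : ((Fin (n + 1) → R) × (Fin (n + 1) → R)) × R) =>
        t.2 * X.permanent + t.1.2 ⬝ᵥ (X.permCompound *ᵥ t.1.1) = 0))
  rw [permanent_eq_mul_add_dotProduct_permCompound_mulVec]
  rfl

end Matrix

theorem Finset.sum_comp_of_maps_to {ι κ M : Type*} [AddCommMonoid M] [DecidableEq κ]
    {s : Finset ι} {t : Finset κ} {g : ι → κ} (h : ∀ i ∈ s, g i ∈ t) (f : κ → M) :
    ∑ i ∈ s, f (g i) = ∑ j ∈ t, #{i ∈ s | g i = j} • f j := by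
  simp_rw [← sum_const, sum_fiberwise_of_maps_to' h]

theorem natCard_mul_add_eq_zero_of_ne_zero {F α : Type*} [Field F] {c : F} (hc : c ≠ 0)
    (g : α → F) : Nat.card {t : α × F // t.2 * c + g t.1 = 0} = Nat.card α :=
  Nat.card_congr
    { toFun t := t.1.1
      invFun a := ⟨(a, -g a / c), by simp [hc]⟩
      left_inv := by
        rintro ⟨⟨a, b⟩, h⟩
        simp only [Subtype.mk.injEq, Prod.mk.injEq, true_and]
        rw [div_eq_iff hc]
        linear_combination -h
      right_inv _ := rfl }

theorem bilinearZeroCount_eq {q k r : ℕ} (hq : 1 ≤ q) (hr : r ≤ k) :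
    bilinearZeroCount q k r = q ^ (k - r) * q ^ k + (q ^ k - q ^ (k - r)) * q ^ (k - 1) := by
  obtain ⟨d, rfl⟩ := Nat.exists_eq_add_of_le hr
  rcases r with _ | r
  · simp [bilinearZeroCount, two_mul, pow_add]
  · have hle : q ^ d ≤ q ^ (r + 1 + d) := Nat.pow_le_pow_right hq (by omega)
    have hpos : 1 ≤ q ^ (r + 1) := Nat.one_le_pow _ _ hq
    rw [bilinearZeroCount, show r + 1 + d - (r + 1) = d by omega,
      show r + 1 + d - 1 = r + d by omega, Nat.add_sub_cancel, two_mul]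
    zify [hle, hpos]
    ring

section Counting

variable {F : Type*} [Field F] [Fintype F] {m n : Type*} [Fintype n]

theorem LinearMap.natCard_ker {V W : Type*} [AddCommGroup V] [Module F V]
    [Module.Finite F V] [AddCommGroup W] [Module F W] (f : V →ₗ[F] W) :
    Nat.card (LinearMap.ker f) =
      Fintype.card F ^ (Module.finrank F V - Module.finrank F (LinearMap.range f)) := by
  rw [Module.natCard_eq_pow_finrank (K := F), Nat.card_eq_fintype_card,
    ← f.finrank_range_add_finrank_ker, Nat.add_sub_cancel_left]

namespace Matrix

theorem natCard_mulVec_eq_zero (B : Matrix m n F) :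
    Nat.card {x : n → F // B *ᵥ x = 0} = Fintype.card F ^ (Fintype.card n - B.rank) := by
  have := B.mulVecLin.natCard_ker
  rwa [Module.finrank_fintype_fun_eq_card] at this

theorem natCard_dotProduct_eq_zero [Fintype m] {w : m → F} (hw : w ≠ 0) :
    Nat.card {y : m → F // y ⬝ᵥ w = 0} = Fintype.card F ^ (Fintype.card m - 1) := by
  have hf : dotProductBilin F F w ≠ 0 := fun h =>
    hw (dotProduct_eq_zero w fun y => by simpa using LinearMap.congr_fun h y)
  have hrange : Module.finrank F (LinearMap.range (dotProductBilin F F w)) = 1 := by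
    rw [LinearMap.range_eq_top.mpr (LinearMap.surjective_of_ne_zero hf), finrank_top,
      Module.finrank_self]
  have := (dotProductBilin F F w).natCard_ker
  rw [Module.finrank_fintype_fun_eq_card, hrange] at this
  rw [← this]
  exact Nat.card_congr (subtypeEquivRight fun y => by simp [dotProduct_comm y w])

theorem natCard_dotProduct_mulVec_eq_zero [Fintype m] (C : Matrix m n F) :
    Nat.card {p : (n → F) × (m → F) // p.2 ⬝ᵥ (C *ᵥ p.1) = 0} =
      Fintype.card F ^ (Fintype.card n - C.rank) * Fintype.card F ^ Fintype.card m +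
        (Fintype.card F ^ Fintype.card n - Fintype.card F ^ (Fintype.card n - C.rank)) *
          Fintype.card F ^ (Fintype.card m - 1) := by
  classical
  have hfiber (x : n → F) : Nat.card {y : m → F // y ⬝ᵥ (C *ᵥ x) = 0} =
      if C *ᵥ x = 0 then Fintype.card F ^ Fintype.card m
      else Fintype.card F ^ (Fintype.card m - 1) := by
    split_ifs with hx
    · simp only [hx, dotProduct_zero, Nat.card_eq_fintype_card, Fintype.card_subtype_true,
        Fintype.card_pi, prod_const, card_univ]
    · exact natCard_dotProduct_eq_zero hx
  have hker : #{x : n → F | C *ᵥ x = 0} = Fintype.card F ^ (Fintype.card n - C.rank) := by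
    rw [← C.natCard_mulVec_eq_zero, Nat.card_eq_fintype_card, Fintype.card_subtype]
  rw [Nat.card_congr (subtypeProdEquivSigmaSubtype fun x y => y ⬝ᵥ (C *ᵥ x) = 0),
    Nat.card_sigma]
  simp only [hfiber, sum_ite, sum_const, smul_eq_mul, filter_not, card_univ_sdiff, hker,
    Fintype.card_pi, prod_const, card_univ]

theorem natCard_dotProduct_mulVec_eq_zero_eq_bilinearZeroCount (C : Matrix n n F) :
    Nat.card {p : (n → F) × (n → F) // p.2 ⬝ᵥ (C *ᵥ p.1) = 0} =
      bilinearZeroCount (Fintype.card F) (Fintype.card n) C.rank := by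
  rw [natCard_dotProduct_mulVec_eq_zero,
    bilinearZeroCount_eq Fintype.card_pos C.rank_le_card_width]

theorem natCard_mul_add_dotProduct_mulVec_eq_zero [DecidableEq F] (c : F) (C : Matrix n n F) :
    Nat.card {t : ((n → F) × (n → F)) × F // t.2 * c + t.1.2 ⬝ᵥ (C *ᵥ t.1.1) = 0} =
      if c = 0 then Fintype.card F * bilinearZeroCount (Fintype.card F) (Fintype.card n) C.rank
      else Fintype.card F ^ (2 * Fintype.card n) := by
  split_ifs with hc
  · simp only [hc, mul_zero, zero_add]
    rw [Nat.card_congr (prodSubtypeFstEquivSubtypeProd (p := fun p : (n → F) × (n → F) =>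
        p.2 ⬝ᵥ (C *ᵥ p.1) = 0)), Nat.card_prod,
      natCard_dotProduct_mulVec_eq_zero_eq_bilinearZeroCount, Nat.card_eq_fintype_card, mul_comm]
  · rw [natCard_mul_add_eq_zero_of_ne_zero hc fun p : (n → F) × (n → F) => p.2 ⬝ᵥ (C *ᵥ p.1)]
    simp only [Nat.card_prod, Nat.card_fun, Nat.card_eq_fintype_card, two_mul, pow_add]

end Matrix

end Counting

/-- Recursive formula for the number of `n×n` matrices with zero permanent
(`n = m + 2 ≥ 2`):
`|Pₙ(F)| = (q^{(n−1)²} − |Pₙ₋₁(F)|) q^{2(n−1)} + q Σ_{r=0}^{n−1} |N⁽ʳ⁾ₙ₋₁(F)| · |V⁽ʳ⁾ₙ₋₁(F)|`,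
where `N⁽ʳ⁾ₙ₋₁(F) = {X ∈ Mₙ₋₁(F) : per X = 0, rank X̂ = r}`. -/
theorem card_permanent_zero_recursion (m : ℕ) (F : Type) [Field F] [Fintype F] :
    Nat.card {A : Matrix (Fin (m + 2)) (Fin (m + 2)) F // A.permanent = 0} =
      (Fintype.card F ^ ((m + 1) ^ 2) -
          Nat.card {A : Matrix (Fin (m + 1)) (Fin (m + 1)) F // A.permanent = 0}) *
        Fintype.card F ^ (2 * (m + 1)) +
      Fintype.card F *
        ∑ r ∈ Finset.range (m + 2),
          Nat.card {X : Matrix (Fin (m + 1)) (Fin (m + 1)) F //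
              X.permanent = 0 ∧ X.permCompound.rank = r} *
            bilinearZeroCount (Fintype.card F) (m + 1) r := by
  classical
  have hcard : Fintype.card (Matrix (Fin (m + 1)) (Fin (m + 1)) F) =
      Fintype.card F ^ ((m + 1) ^ 2) := by
    rw [← Nat.card_eq_fintype_card, Matrix, Nat.card_fun, Nat.card_fun, Nat.card_eq_fintype_card,
      Nat.card_fin, ← pow_mul, sq]
  have hrank : ∀ X ∈ ({X | X.permanent = 0} : Finset (Matrix (Fin (m + 1)) (Fin (m + 1)) F)),
      X.permCompound.rank ∈ range (m + 2) := fun X _ =>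
    mem_range.mpr (Nat.lt_succ_of_le X.permCompound.rank_le_width)
  simp only [natCard_permanent_eq_zero_eq_sum, natCard_mul_add_dotProduct_mulVec_eq_zero,
    Fintype.card_fin]
  rw [sum_ite, ← mul_sum, sum_comp_of_maps_to hrank, sum_const, filter_not, card_univ_sdiff,
    hcard, add_comm]
  simp only [filter_filter, smul_eq_mul, Nat.card_eq_fintype_card, Fintype.card_subtype]
end

section
/- For every integer n ≥ 4 there exists a constant C such that for all integers q ≥ 2, |𝔘_n(q) − q^{n²−1}| ≤ C q^{n²−3}. -/
/-- `v q k r = q^{2(k−r)}((qʳ − 1) q^{r−1} + qʳ)`. -/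
def vAux (q : ℤ) (k r : ℕ) : ℤ :=
  q ^ (2 * (k - r)) * ((q ^ r - 1) * q ^ (r - 1) + q ^ r)
lemma ub_pow_le {q : ℤ} (hq : 2 ≤ q) {a b : ℕ} (h : a ≤ b) : q ^ a ≤ q ^ b :=
  pow_le_pow_right₀ (by linarith) h

lemma ub_pow_nonneg {q : ℤ} (hq : 2 ≤ q) (e : ℕ) : 0 ≤ q ^ e :=
  pow_nonneg (by linarith) e

lemma bd_mono {q C X : ℤ} (hq : 2 ≤ q) (hC : 0 ≤ C) {e E : ℕ} (h : e ≤ E)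
    (hX : |X| ≤ C * q ^ e) : |X| ≤ C * q ^ E :=
  hX.trans (mul_le_mul_of_nonneg_left (ub_pow_le hq h) hC)

lemma bd_cmono {q C C' X : ℤ} (hq : 2 ≤ q) (hC : C ≤ C') {e : ℕ}
    (hX : |X| ≤ C * q ^ e) : |X| ≤ C' * q ^ e :=
  hX.trans (mul_le_mul_of_nonneg_right hC (ub_pow_nonneg hq e))

lemma bd_add {q C D X Y : ℤ} {e : ℕ} (hX : |X| ≤ C * q ^ e) (hY : |Y| ≤ D * q ^ e) :
    |X + Y| ≤ (C + D) * q ^ e :=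
  (abs_add_le X Y).trans (by linarith)

lemma bd_sub {q C D X Y : ℤ} {e : ℕ} (hX : |X| ≤ C * q ^ e) (hY : |Y| ≤ D * q ^ e) :
    |X - Y| ≤ (C + D) * q ^ e :=
  (abs_sub X Y).trans (by linarith)

lemma bd_mul {q C D X Y : ℤ} (hq : 2 ≤ q) {a b : ℕ}
    (hX : |X| ≤ C * q ^ a) (hY : |Y| ≤ D * q ^ b) : |X * Y| ≤ (C * D) * q ^ (a + b) := by
  have h0X : (0:ℤ) ≤ |X| := abs_nonneg X
  have h0Y : (0:ℤ) ≤ |Y| := abs_nonneg Y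
  calc |X * Y| = |X| * |Y| := abs_mul X Y
    _ ≤ (C * q ^ a) * (D * q ^ b) := mul_le_mul hX hY h0Y (le_trans h0X hX)
    _ = (C * D) * q ^ (a + b) := by rw [pow_add]; ring

lemma bd_pow {q : ℤ} (hq : 2 ≤ q) (e : ℕ) : |q ^ e| ≤ 1 * q ^ e := by
  rw [abs_of_nonneg (ub_pow_nonneg hq e), one_mul]

lemma bd_self {q : ℤ} (hq : 2 ≤ q) : |q| ≤ 1 * q ^ 1 := by
  rw [abs_of_nonneg (by linarith : (0:ℤ) ≤ q), pow_one, one_mul]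

lemma nat_choose_le_two_pow (n k : ℕ) : n.choose k ≤ 2 ^ n := by
  rcases le_or_gt k n with h | h
  · calc n.choose k ≤ ∑ m ∈ Finset.range (n+1), n.choose m :=
        Finset.single_le_sum (fun _ _ => Nat.zero_le _) (Finset.mem_range.2 (by omega))
      _ = 2 ^ n := Nat.sum_range_choose n
  · simp [Nat.choose_eq_zero_of_lt h]

lemma bd_choose_sq {n k : ℕ} : ((n.choose k : ℤ))^2 ≤ 4 ^ n := by
  have h : (n.choose k : ℤ) ≤ 2 ^ n := by exact_mod_cast nat_choose_le_two_pow n k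
  have h0 : (0:ℤ) ≤ (n.choose k : ℤ) := by positivity
  calc ((n.choose k : ℤ))^2 ≤ ((2:ℤ)^n)^2 := pow_le_pow_left₀ h0 h 2
    _ = 4 ^ n := by rw [← pow_mul, mul_comm, pow_mul]; norm_num

/-- `|q^e - (q-3)^e| ≤ 3*e*q^(e-1)` for `q ≥ 2`. -/
lemma bd_pow_sub_pow {q : ℤ} (hq : 2 ≤ q) (e : ℕ) :
    |q ^ e - (q - 3) ^ e| ≤ (3 * e) * q ^ (e - 1) := by
  have h3 : |q - (q - 3)| = 3 := by norm_num
  have habs : |q - 3| ≤ q := by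
    rw [abs_le]; constructor <;> linarith
  rw [← geom_sum₂_mul q (q - 3) e, abs_mul, h3]
  have hsum : |∑ i ∈ Finset.range e, q ^ i * (q - 3) ^ (e - 1 - i)| ≤ e * q ^ (e - 1) := by
    calc |∑ i ∈ Finset.range e, q ^ i * (q - 3) ^ (e - 1 - i)|
        ≤ ∑ i ∈ Finset.range e, |q ^ i * (q - 3) ^ (e - 1 - i)| :=
          Finset.abs_sum_le_sum_abs _ _
      _ ≤ ∑ _i ∈ Finset.range e, q ^ (e - 1) := by
          apply Finset.sum_le_sum
          intro i hi
          have hie : i ≤ e - 1 := by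
            have := Finset.mem_range.1 hi; omega
          rw [abs_mul, abs_pow, abs_pow, abs_of_nonneg (by linarith : (0:ℤ) ≤ q)]
          calc q ^ i * |q - 3| ^ (e - 1 - i) ≤ q ^ i * q ^ (e - 1 - i) := by
                apply mul_le_mul_of_nonneg_left _ (ub_pow_nonneg hq i)
                exact pow_le_pow_left₀ (abs_nonneg _) habs _
            _ = q ^ (e - 1) := by rw [← pow_add]; congr 1; omega
      _ = e * q ^ (e - 1) := by rw [Finset.sum_const, Finset.card_range, nsmul_eq_mul]
  calc |∑ i ∈ Finset.range e, q ^ i * (q - 3) ^ (e - 1 - i)| * 3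
      ≤ (e * q ^ (e - 1)) * 3 := by
        apply mul_le_mul_of_nonneg_right hsum (by norm_num)
    _ = (3 * e) * q ^ (e - 1) := by ring

lemma vAux_zero {q : ℤ} (k : ℕ) : vAux q k 0 = q ^ (2 * k) := by
  simp [vAux]

lemma vAux_one {q : ℤ} (k : ℕ) : vAux q k 1 = q ^ (2 * (k - 1)) * (2 * q - 1) := by
  unfold vAux; congr 1; norm_num; ring

lemma vAux_two {q : ℤ} (k : ℕ) : vAux q k 2 = q ^ (2 * (k - 2)) * (q^3 + q^2 - q) := by
  unfold vAux; congr 1; norm_num; ring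

lemma bd_vAux_one {q : ℤ} (hq : 2 ≤ q) {k : ℕ} (hk : 1 ≤ k) :
    |vAux q k 1| ≤ 2 * q ^ (2 * k - 1) := by
  rw [vAux_one]
  have h1 : |q ^ (2 * (k - 1)) * (2 * q - 1)| = q ^ (2 * (k-1)) * (2*q-1) := by
    rw [abs_of_nonneg]
    exact mul_nonneg (ub_pow_nonneg hq _) (by linarith)
  rw [h1]
  calc q ^ (2 * (k-1)) * (2*q-1) ≤ q ^ (2*(k-1)) * (2*q) := by
        apply mul_le_mul_of_nonneg_left _ (ub_pow_nonneg hq _); linarith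
    _ = 2 * q ^ (2*(k-1) + 1) := by rw [pow_succ]; ring
    _ ≤ 2 * q ^ (2*k - 1) := by
        apply mul_le_mul_of_nonneg_left (ub_pow_le hq (by omega)) (by norm_num)

lemma bd_vAux_two {q : ℤ} (hq : 2 ≤ q) {k : ℕ} (hk : 2 ≤ k) :
    |vAux q k 2| ≤ 2 * q ^ (2 * k - 1) := by
  rw [vAux_two]
  have h2 : (0:ℤ) ≤ q^3 + q^2 - q := by nlinarith
  have h1 : |q ^ (2 * (k - 2)) * (q^3+q^2-q)| = q ^ (2 * (k-2)) * (q^3+q^2-q) := by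
    rw [abs_of_nonneg]
    exact mul_nonneg (ub_pow_nonneg hq _) h2
  rw [h1]
  calc q ^ (2 * (k-2)) * (q^3+q^2-q) ≤ q ^ (2*(k-2)) * (2*q^3) := by
        apply mul_le_mul_of_nonneg_left _ (ub_pow_nonneg hq _); nlinarith
    _ = 2 * q ^ (2*(k-2) + 3) := by rw [pow_add]; ring
    _ ≤ 2 * q ^ (2*k - 1) := by
        apply mul_le_mul_of_nonneg_left (ub_pow_le hq (by omega)) (by norm_num)

set_option maxHeartbeats 2000000

/-- For every `n ≥ 4` there is a constant `C` such that for all integers `q ≥ 2`,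
`|𝔘ₙ(q) − q^{n²−1}| ≤ C q^{n²−3}`. -/
theorem upper_bound_asymptotics
    (L U N0 N1 : ℕ → ℤ → ℤ)
    (hL1 : ∀ q, L 1 q = 0) (hL2 : ∀ q, L 2 q = 0)
    (hU1 : ∀ q, U 1 q = 1) (hU2 : ∀ q, U 2 q = q ^ 3 + q ^ 2 - q)
    (hL3 : ∀ q, L 3 q =
      q ^ 9 - (q ^ 3 - 1) * (q ^ 3 - q) * (q ^ 3 - q ^ 2) - q ^ 2 * (q - 1) ^ 5)
    (hU3 : ∀ q, U 3 q =
      q ^ 9 - (q ^ 3 - 1) * (q ^ 3 - q) * (q ^ 3 - q ^ 2) - q ^ 2 * (q - 1) ^ 5)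
    (hN0two : ∀ q, N0 2 q = 1)
    (hN0 : ∀ n, 4 ≤ n → ∀ q, N0 (n - 1) q =
      1 + ∑ k ∈ Finset.Icc 1 (n - 3),
        ((n - 1).choose (n - k - 2) : ℤ) ^ 2 * q ^ (2 * (n - k - 2) * (k + 1)) *
          (q ^ ((n - k - 2) ^ 2) - L (n - k - 2) q))
    (hN1 : ∀ n, 4 ≤ n → ∀ q, N1 (n - 1) q =
      (q ^ ((n - 1) ^ 2 - 1) - (q - 3) ^ ((n - 1) ^ 2 - 1)) +
        N0 (n - 2) q * q ^ (2 * (n - 2) + 1) +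
        q * U (n - 2) q * vAux q (n - 2) 1)
    (hL : ∀ n, 4 ≤ n → ∀ q, L n q =
      (q ^ ((n - 1) ^ 2) - U (n - 1) q) * q ^ (2 * (n - 1)))
    (hU : ∀ n, 4 ≤ n → ∀ q, U n q =
      (q ^ ((n - 1) ^ 2) - L (n - 1) q) * q ^ (2 * (n - 1)) +
        q * N0 (n - 1) q * vAux q (n - 1) 0 +
        q * N1 (n - 1) q * vAux q (n - 1) 1 +
        q * U (n - 1) q * vAux q (n - 1) 2)
    (n : ℕ) (hn : 4 ≤ n) :
    ∃ C : ℤ, ∀ q : ℤ, 2 ≤ q →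
      |U n q - q ^ (n ^ 2 - 1)| ≤ C * q ^ (n ^ 2 - 3) := by
  -- explicit form of U 3 and basic bounds
  have hL3U : ∀ q : ℤ, L 3 q = U 3 q := fun q => by rw [hL3, hU3]
  have hU3e : ∀ q : ℤ, U 3 q = q^8 + 5*q^6 - 11*q^5 + 9*q^4 - 4*q^3 + q^2 := by
    intro q; rw [hU3]; ring
  have hU3b : ∀ q : ℤ, 2 ≤ q → |U 3 q - q^8| ≤ 30 * q^6 := by
    intro q hq
    have hd : U 3 q - q^8 = 5*q^6 - 11*q^5 + 9*q^4 - 4*q^3 + q^2 := by rw [hU3e]; ring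
    rw [hd, abs_le]
    have g2 : q^2 ≤ q^6 := ub_pow_le hq (by norm_num)
    have g3 : q^3 ≤ q^6 := ub_pow_le hq (by norm_num)
    have g4 : q^4 ≤ q^6 := ub_pow_le hq (by norm_num)
    have g5 : q^5 ≤ q^6 := ub_pow_le hq (by norm_num)
    have n2 := ub_pow_nonneg hq 2
    have n3 := ub_pow_nonneg hq 3
    have n4 := ub_pow_nonneg hq 4
    have n5 := ub_pow_nonneg hq 5
    have n6 := ub_pow_nonneg hq 6
    constructor <;> linarith
  have hU3c : ∀ q : ℤ, 2 ≤ q → |U 3 q| ≤ 31 * q^8 := by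
    intro q hq
    have h1 : |U 3 q| ≤ |U 3 q - q^8| + |q^8| := by
      have := abs_add_le (U 3 q - q^8) (q^8); simpa using this
    have h2 := hU3b q hq
    have h3 : |q^8| = q^8 := abs_of_nonneg (ub_pow_nonneg hq 8)
    have g6 : q^6 ≤ q^8 := ub_pow_le hq (by norm_num)
    have n6 := ub_pow_nonneg hq 6
    linarith
  -- crude polynomial bounds on all the quantities
  have crude : ∀ m : ℕ, ∃ C : ℤ, 0 ≤ C ∧ ∀ j, j ≤ m → ∀ q : ℤ, 2 ≤ q →
      |U (j+1) q| ≤ C * q ^ ((j+1)^2 - 1) ∧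
      |L (j+1) q| ≤ C * q ^ ((j+1)^2) ∧
      |N0 (j+2) q| ≤ C * q ^ ((j+2)^2 - 4) ∧
      (1 ≤ j → |N1 (j+2) q| ≤ C * q ^ ((j+2)^2 - 2)) := by
    intro m
    induction m with
    | zero =>
      refine ⟨1, one_pos.le, ?_⟩
      intro j hj q hq
      have hj0 : j = 0 := by omega
      subst hj0
      refine ⟨?_, ?_, ?_, fun h => absurd h (by omega)⟩
      · have e : ((0:ℕ)+1)^2 - 1 = 0 := by norm_num
        rw [e, show (0:ℕ)+1 = 1 from rfl, hU1]; norm_num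
      · have e : ((0:ℕ)+1)^2 = 1 := by norm_num
        rw [e, show (0:ℕ)+1 = 1 from rfl, hL1]
        simp only [abs_zero]
        have := ub_pow_nonneg hq 1; linarith
      · have e : ((0:ℕ)+2)^2 - 4 = 0 := by norm_num
        rw [e, show (0:ℕ)+2 = 2 from rfl, hN0two]; norm_num
    | succ m ih =>
      obtain ⟨C, hC0, hIH⟩ := ih
      -- new U bound at index m+2
      have hUnew : ∀ q : ℤ, 2 ≤ q → |U (m+2) q| ≤ (31 + 6*C) * q ^ ((m+2)^2 - 1) := by
        intro q hq
        have hq0 : (0:ℤ) ≤ q := by linarith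
        rcases Nat.lt_or_ge m 2 with hm | hm
        · interval_cases m
          · -- U 2
            have e : ((0:ℕ)+2)^2 - 1 = 3 := by norm_num
            rw [e, show (0:ℕ)+2 = 2 from rfl, hU2]
            have n3 := ub_pow_nonneg hq 3
            have n2 := ub_pow_nonneg hq 2
            have g2 : q^2 ≤ q^3 := ub_pow_le hq (by norm_num)
            have h3 : |q^3+q^2-q| ≤ 3*q^3 := by
              rw [abs_le]; constructor <;> nlinarith
            calc |q^3+q^2-q| ≤ 3*q^3 := h3
              _ ≤ (31+6*C)*q^3 := by nlinarith
          · -- U 3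
            have e : ((1:ℕ)+2)^2 - 1 = 8 := by norm_num
            rw [e, show (1:ℕ)+2 = 3 from rfl]
            have n8 := ub_pow_nonneg hq 8
            calc |U 3 q| ≤ 31*q^8 := hU3c q hq
              _ ≤ (31+6*C)*q^8 := by nlinarith
        · obtain ⟨w, rfl⟩ : ∃ w, m = w + 2 := ⟨m - 2, by omega⟩
          have e1 : w+2+2 = w+4 := by omega
          rw [e1]
          have hu := hU (w+4) (by omega) q
          have e2 : w+4-1 = w+3 := by omega
          rw [e2] at hu
          rw [hu, vAux_zero]
          have hL' := (hIH (w+2) (by omega) q hq).2.1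
          have e3 : w+2+1 = w+3 := by omega
          rw [e3] at hL'
          have hN0' := (hIH (w+1) (by omega) q hq).2.2.1
          have e4 : w+1+2 = w+3 := by omega
          rw [e4] at hN0'
          have hN1' := (hIH (w+1) (by omega) q hq).2.2.2 (by omega)
          rw [e4] at hN1'
          have hU' := (hIH (w+2) (by omega) q hq).1
          rw [e3] at hU'
          have s3 : (w+3)^2 = w*w + 6*w + 9 := by ring
          have s4 : (w+4)^2 = w*w + 8*w + 16 := by ring
          have x1 : (w+3)^2 + 2*(w+3) ≤ (w+4)^2-1 := by omega
          have x2 : 1 + ((w+3)^2 - 4) + 2*(w+3) ≤ (w+4)^2-1 := by omega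
          have x3 : 1 + ((w+3)^2 - 2) + (2*(w+3) - 1) ≤ (w+4)^2-1 := by omega
          have x4 : 1 + ((w+3)^2 - 1) + (2*(w+3) - 1) ≤ (w+4)^2-1 := by omega
          have b1 : |(q^((w+3)^2) - L (w+3) q) * q^(2*(w+3))| ≤ (1+C) * q^((w+4)^2-1) := by
            have h := bd_mul hq (bd_sub (bd_pow hq ((w+3)^2)) hL') (bd_pow hq (2*(w+3)))
            simpa only [one_mul, mul_one] using bd_mono hq (by linarith) x1 h
          have b2 : |q * N0 (w+3) q * q^(2*(w+3))| ≤ C * q^((w+4)^2-1) := by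
            have h := bd_mul hq (bd_mul hq (bd_self hq) hN0') (bd_pow hq (2*(w+3)))
            simpa only [one_mul, mul_one] using bd_mono hq (by linarith) x2 h
          have b3 : |q * N1 (w+3) q * vAux q (w+3) 1| ≤ (C*2) * q^((w+4)^2-1) := by
            have h := bd_mul hq (bd_mul hq (bd_self hq) hN1') (bd_vAux_one (k := w+3) hq (by omega))
            simpa only [one_mul, mul_one] using bd_mono hq (by positivity) x3 h
          have b4 : |q * U (w+3) q * vAux q (w+3) 2| ≤ (C*2) * q^((w+4)^2-1) := by
            have h := bd_mul hq (bd_mul hq (bd_self hq) hU') (bd_vAux_two (k := w+3) hq (by omega))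
            simpa only [one_mul, mul_one] using bd_mono hq (by positivity) x4 h
          have hsum := bd_add (bd_add (bd_add b1 b2) b3) b4
          exact bd_cmono hq (by linarith) hsum
      -- new L bound at index m+2
      have hLnew : ∀ q : ℤ, 2 ≤ q → |L (m+2) q| ≤ (31 + C) * q ^ ((m+2)^2) := by
        intro q hq
        rcases Nat.lt_or_ge m 2 with hm | hm
        · interval_cases m
          · rw [show (0:ℕ)+2 = 2 from rfl, hL2]
            simp only [abs_zero]
            have := ub_pow_nonneg hq (2^2)
            nlinarith [ub_pow_nonneg hq ((0+2:ℕ)^2)]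
          · rw [show (1:ℕ)+2 = 3 from rfl, hL3U]
            have e : ((1:ℕ)+2)^2 = 9 := by norm_num
            rw [e]
            have g : q^8 ≤ q^9 := ub_pow_le hq (by norm_num)
            have n8 := ub_pow_nonneg hq 8
            calc |U 3 q| ≤ 31*q^8 := hU3c q hq
              _ ≤ (31+C)*q^9 := by nlinarith
        · obtain ⟨w, rfl⟩ : ∃ w, m = w + 2 := ⟨m - 2, by omega⟩
          have e1 : w+2+2 = w+4 := by omega
          rw [e1]
          have hl := hL (w+4) (by omega) q
          have e2 : w+4-1 = w+3 := by omega
          rw [e2] at hl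
          rw [hl]
          have hU' := (hIH (w+2) (by omega) q hq).1
          have e3 : w+2+1 = w+3 := by omega
          rw [e3] at hU'
          have s3 : (w+3)^2 = w*w + 6*w + 9 := by ring
          have s4 : (w+4)^2 = w*w + 8*w + 16 := by ring
          have hU'' : |U (w+3) q| ≤ C * q^((w+3)^2) :=
            bd_mono hq hC0 (by omega) hU'
          have h := bd_mul hq (bd_sub (bd_pow hq ((w+3)^2)) hU'') (bd_pow hq (2*(w+3)))
          have h2 := bd_mono hq (by linarith) (show (w+3)^2 + 2*(w+3) ≤ (w+4)^2 by omega) h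
          simp only [one_mul, mul_one] at h2
          exact bd_cmono hq (by linarith) h2
      -- new N0 bound at index m+3
      have hN0new : ∀ q : ℤ, 2 ≤ q →
          |N0 (m+3) q| ≤ (1 + ((m:ℤ)+1) * (4^(m+3) * (1+C))) * q ^ ((m+3)^2 - 4) := by
        intro q hq
        have h := hN0 (m+4) (by omega) q
        have e1 : m+4-1 = m+3 := by omega
        have e2 : m+4-3 = m+1 := by omega
        rw [e1, e2] at h
        rw [h]
        have hone : |(1:ℤ)| ≤ 1 * q ^ ((m+3)^2 - 4) := by
          rw [abs_one, one_mul]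
          have := ub_pow_le hq (Nat.zero_le ((m+3)^2 - 4))
          simpa using this
        have hsb : |∑ k ∈ Finset.Icc 1 (m+1),
            ((m+3).choose (m+4-k-2) : ℤ) ^ 2 * q ^ (2 * (m+4-k-2) * (k + 1)) *
              (q ^ ((m+4-k-2) ^ 2) - L (m+4-k-2) q)|
            ≤ (((m:ℤ)+1) * (4^(m+3) * (1+C))) * q ^ ((m+3)^2 - 4) := by
          calc |∑ k ∈ Finset.Icc 1 (m+1),
              ((m+3).choose (m+4-k-2) : ℤ) ^ 2 * q ^ (2 * (m+4-k-2) * (k + 1)) *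
                (q ^ ((m+4-k-2) ^ 2) - L (m+4-k-2) q)|
              ≤ ∑ k ∈ Finset.Icc 1 (m+1),
                |((m+3).choose (m+4-k-2) : ℤ) ^ 2 * q ^ (2 * (m+4-k-2) * (k + 1)) *
                  (q ^ ((m+4-k-2) ^ 2) - L (m+4-k-2) q)| := Finset.abs_sum_le_sum_abs _ _
            _ ≤ ∑ _k ∈ Finset.Icc 1 (m+1), (4^(m+3) * (1+C)) * q ^ ((m+3)^2 - 4) := by
                apply Finset.sum_le_sum
                intro k hk
                obtain ⟨hk1, hk2⟩ := Finset.mem_Icc.1 hk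
                set i := m+4-k-2 with hidef
                have hi1 : 1 ≤ i := by omega
                have hik : i + k = m+2 := by omega
                have hLi := (hIH (i-1) (by omega) q hq).2.1
                have e3 : i-1+1 = i := by omega
                rw [e3] at hLi
                have t1 : |((m+3).choose i : ℤ)^2 * q^(2*i*(k+1))| ≤
                    (((m+3).choose i : ℤ)^2) * q^(2*i*(k+1)) :=
                  le_of_eq (abs_of_nonneg (by positivity))
                have t2 : |q^(i^2) - L i q| ≤ (1+C)*q^(i^2) := bd_sub (bd_pow hq _) hLi
                have t := bd_mul hq t1 t2
                have hkey : (m+3)^2 = i^2 + 2*i*(k+1) + (k+1)^2 := by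
                  rw [show m+3 = i + (k+1) from by omega]; ring
                have hk4 : 4 ≤ (k+1)^2 := by nlinarith
                have hexp : 2*i*(k+1) + i^2 ≤ (m+3)^2 - 4 := by omega
                have t3 := bd_mono hq (by positivity) hexp t
                refine t3.trans ?_
                apply mul_le_mul_of_nonneg_right _ (ub_pow_nonneg hq _)
                exact mul_le_mul_of_nonneg_right bd_choose_sq (by linarith)
            _ = (((m:ℤ)+1) * (4^(m+3) * (1+C))) * q ^ ((m+3)^2 - 4) := by
                rw [Finset.sum_const, Nat.card_Icc, nsmul_eq_mul]
                push_cast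
                ring
        have := bd_add hone hsb
        exact this
      -- new N1 bound at index m+3
      have hN1new : ∀ q : ℤ, 2 ≤ q →
          |N1 (m+3) q| ≤ ((3*((m+3)^2-1 : ℕ) : ℤ) + C + (31+6*C)*2) * q ^ ((m+3)^2 - 2) := by
        intro q hq
        have h := hN1 (m+4) (by omega) q
        have e1 : m+4-1 = m+3 := by omega
        have e2 : m+4-2 = m+2 := by omega
        rw [e1, e2] at h
        rw [h]
        have s2 : (m+2)^2 = m*m + 4*m + 4 := by ring
        have s3 : (m+3)^2 = m*m + 6*m + 9 := by ring
        have b1 : |q^((m+3)^2-1) - (q-3)^((m+3)^2-1)| ≤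
            (3*((m+3)^2-1 : ℕ) : ℤ) * q ^ ((m+3)^2 - 2) := by
          have hb := bd_pow_sub_pow hq ((m+3)^2-1)
          have e3 : (m+3)^2-1-1 = (m+3)^2-2 := by omega
          rw [e3] at hb
          exact_mod_cast hb
        have hN0'' := (hIH m le_rfl q hq).2.2.1
        have x1 : ((m+2)^2 - 4) + (2*(m+2)+1) ≤ (m+3)^2 - 2 := by omega
        have b2 : |N0 (m+2) q * q^(2*(m+2)+1)| ≤ C * q^((m+3)^2-2) := by
          have hh := bd_mul hq hN0'' (bd_pow hq (2*(m+2)+1))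
          simpa only [one_mul, mul_one] using bd_mono hq (by linarith) x1 hh
        have x2 : 1 + ((m+2)^2 - 1) + (2*(m+2) - 1) ≤ (m+3)^2 - 2 := by omega
        have b3 : |q * U (m+2) q * vAux q (m+2) 1| ≤ ((31+6*C)*2) * q^((m+3)^2-2) := by
          have hh := bd_mul hq (bd_mul hq (bd_self hq) (hUnew q hq))
            (bd_vAux_one (k := m+2) hq (by omega))
          simpa only [one_mul, mul_one] using bd_mono hq (by positivity) x2 hh
        exact bd_add (bd_add b1 b2) b3
      -- assemble
      refine ⟨(31 + 6*C) + (31 + C) + (1 + ((m:ℤ)+1) * (4^(m+3) * (1+C)))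
        + ((3*((m+3)^2-1 : ℕ) : ℤ) + C + (31+6*C)*2) + C, ?_, ?_⟩
      · have g1 : (0:ℤ) ≤ ((m:ℤ)+1) * (4^(m+3) * (1+C)) := by positivity
        have g2 : (0:ℤ) ≤ (3*((m+3)^2-1 : ℕ) : ℤ) := by positivity
        linarith
      intro j hj q hq
      have g1 : (0:ℤ) ≤ ((m:ℤ)+1) * (4^(m+3) * (1+C)) := by positivity
      have g2 : (0:ℤ) ≤ (3*((m+3)^2-1 : ℕ) : ℤ) := by positivity
      rcases Nat.lt_or_ge j (m+1) with hjm | hjm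
      · obtain ⟨o1, o2, o3, o4⟩ := hIH j (by omega) q hq
        have hCle : C ≤ (31 + 6*C) + (31 + C) + (1 + ((m:ℤ)+1) * (4^(m+3) * (1+C)))
            + ((3*((m+3)^2-1 : ℕ) : ℤ) + C + (31+6*C)*2) + C := by linarith
        exact ⟨bd_cmono hq hCle o1, bd_cmono hq hCle o2, bd_cmono hq hCle o3,
          fun h1 => bd_cmono hq hCle (o4 h1)⟩
      · have hj1 : j = m+1 := by omega
        subst hj1
        have eU : m+1+1 = m+2 := by omega
        have eN : m+1+2 = m+3 := by omega
        rw [eU, eN]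
        refine ⟨bd_cmono hq (by linarith) (hUnew q hq),
          bd_cmono hq (by linarith) (hLnew q hq),
          bd_cmono hq (by linarith) (hN0new q hq),
          fun _ => bd_cmono hq (by linarith) (hN1new q hq)⟩
  -- refined asymptotics
  have refined : ∀ m : ℕ, ∃ C : ℤ, 0 ≤ C ∧ ∀ q : ℤ, 2 ≤ q →
      |U (m+3) q - q ^ ((m+3)^2 - 1)| ≤ C * q ^ ((m+3)^2 - 3) := by
    intro m
    induction m using Nat.strong_induction_on with
    | _ m ih =>
    rcases Nat.lt_or_ge m 2 with hm | hm
    · interval_cases m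
      · refine ⟨30, by norm_num, ?_⟩
        intro q hq
        have e1 : ((0:ℕ)+3)^2 - 1 = 8 := by norm_num
        have e2 : ((0:ℕ)+3)^2 - 3 = 6 := by norm_num
        rw [e1, e2, show (0:ℕ)+3 = 3 from rfl]
        exact hU3b q hq
      · obtain ⟨Cc, hCc0, hcr⟩ := crude 1
        refine ⟨3*Cc + 62, by linarith, ?_⟩
        intro q hq
        have hn03 := (hcr 1 le_rfl q hq).2.2.1
        have hn13 := (hcr 1 le_rfl q hq).2.2.2 le_rfl
        rw [show (1:ℕ)+2 = 3 from rfl] at hn03 hn13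
        have e3 : ((3:ℕ))^2 - 4 = 5 := by norm_num
        have e4 : ((3:ℕ))^2 - 2 = 7 := by norm_num
        rw [e3] at hn03
        rw [e4] at hn13
        have e1 : ((1:ℕ)+3)^2 - 1 = 15 := by norm_num
        have e2 : ((1:ℕ)+3)^2 - 3 = 13 := by norm_num
        rw [e1, e2, show (1:ℕ)+3 = 4 from rfl]
        have key : U 4 q - q^15 = q * N0 3 q * q^(2*3) + q * N1 3 q * vAux q 3 1
            + U 3 q * (q^5 - q^4) := by
          have h := hU 4 (by norm_num) q
          norm_num at h
          rw [h, hL3U, vAux_zero, vAux_two]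
          norm_num
          ring
        rw [key]
        have x1 : 1 + 5 + 2*3 ≤ 13 := by norm_num
        have r1 : |q * N0 3 q * q^(2*3)| ≤ Cc * q^13 := by
          have hh := bd_mul hq (bd_mul hq (bd_self hq) hn03) (bd_pow hq (2*3))
          simpa only [one_mul, mul_one] using bd_mono hq (by linarith) x1 hh
        have x2 : 1 + 7 + (2*3 - 1) ≤ 13 := by norm_num
        have r2 : |q * N1 3 q * vAux q 3 1| ≤ (Cc*2) * q^13 := by
          have hh := bd_mul hq (bd_mul hq (bd_self hq) hn13)
            (bd_vAux_one (k := 3) hq (by norm_num))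
          simpa only [one_mul, mul_one] using bd_mono hq (by positivity) x2 hh
        have x3 : 8 + 5 ≤ 13 := by norm_num
        have r3 : |U 3 q * (q^5 - q^4)| ≤ (31*(1+1)) * q^13 := by
          have h5 : |q^5 - q^4| ≤ (1+1)*q^5 :=
            bd_sub (bd_pow hq 5) (bd_mono hq one_pos.le (by norm_num) (bd_pow hq 4))
          have hh := bd_mul hq (hU3c q hq) h5
          exact bd_mono hq (by positivity) x3 hh
        have total := bd_add (bd_add r1 r2) r3
        exact bd_cmono hq (by linarith) total
    · obtain ⟨w, rfl⟩ : ∃ w, m = w + 2 := ⟨m - 2, by omega⟩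
      obtain ⟨C1, hC10, h1a⟩ := ih (w+1) (by omega)
      obtain ⟨C2, hC20, h2a⟩ := ih w (by omega)
      obtain ⟨Cc, hCc0, hcr⟩ := crude (w+2)
      refine ⟨3*Cc + 2*C1 + C2 + 3, by linarith, ?_⟩
      intro q hq
      have e0 : w+2+3 = w+5 := by omega
      rw [e0]
      have h1 := h1a q hq
      have e1 : w+1+3 = w+4 := by omega
      rw [e1] at h1
      have h2 := h2a q hq
      have hn0 := (hcr (w+2) le_rfl q hq).2.2.1
      have hn1 := (hcr (w+2) le_rfl q hq).2.2.2 (by omega)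
      have e2 : w+2+2 = w+4 := by omega
      rw [e2] at hn0 hn1
      have fa : (w+5)^2 = w*w+10*w+25 := by ring
      have f4 : (w+4)^2 = w*w+8*w+16 := by ring
      have f5 : (w+3)^2 = w*w+6*w+9 := by ring
      have f1 : (w+5)^2-1 = w*w+10*w+24 := by omega
      have f2 : (w+5)^2-3 = w*w+10*w+22 := by omega
      have f3 : (w+5)^2-4 = w*w+10*w+21 := by omega
      have f6 : (w+3)^2-1 = w*w+6*w+8 := by omega
      have f7 : (w+4)^2-1 = w*w+8*w+15 := by omega
      have key : U (w+5) q - q^((w+5)^2-1) =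
          q * N0 (w+4) q * q^(2*(w+4)) + q * N1 (w+4) q * vAux q (w+4) 1
          + (2*q^((w+5)^2-3) - q^((w+5)^2-4))
          + (U (w+3) q - q^((w+3)^2-1)) * q^(2*(w+3)+2*(w+4))
          + (U (w+4) q - q^((w+4)^2-1)) * (q * q^(2*(w+2)) * (q^3+q^2-q)) := by
        have hu := hU (w+5) (by omega) q
        have eu : w+5-1 = w+4 := by omega
        rw [eu] at hu
        have hl := hL (w+4) (by omega) q
        have el : w+4-1 = w+3 := by omega
        rw [el] at hl
        rw [hu, hl, vAux_zero, vAux_two, show w+4-2 = w+2 from by omega]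
        rw [f1, f2, f3, f6, f7, f4, f5]
        ring
      rw [key]
      have x1 : 1 + ((w+4)^2-4) + 2*(w+4) ≤ (w+5)^2-3 := by omega
      have r1 : |q * N0 (w+4) q * q^(2*(w+4))| ≤ Cc * q^((w+5)^2-3) := by
        have hh := bd_mul hq (bd_mul hq (bd_self hq) hn0) (bd_pow hq (2*(w+4)))
        simpa only [one_mul, mul_one] using bd_mono hq (by linarith) x1 hh
      have x2 : 1 + ((w+4)^2-2) + (2*(w+4)-1) ≤ (w+5)^2-3 := by omega
      have r2 : |q * N1 (w+4) q * vAux q (w+4) 1| ≤ (Cc*2) * q^((w+5)^2-3) := by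
        have hh := bd_mul hq (bd_mul hq (bd_self hq) hn1)
          (bd_vAux_one (k := w+4) hq (by omega))
        simpa only [one_mul, mul_one] using bd_mono hq (by positivity) x2 hh
      have r3 : |2*q^((w+5)^2-3) - q^((w+5)^2-4)| ≤ (2+1) * q^((w+5)^2-3) := by
        have a1 : |2*q^((w+5)^2-3)| ≤ 2*q^((w+5)^2-3) := by
          rw [abs_of_nonneg (by positivity)]
        have a2 : |q^((w+5)^2-4)| ≤ 1*q^((w+5)^2-3) :=
          bd_mono hq one_pos.le (by omega) (bd_pow hq _)
        exact bd_sub a1 a2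
      have x4 : ((w+3)^2-3) + (2*(w+3)+2*(w+4)) ≤ (w+5)^2-3 := by omega
      have r4 : |(U (w+3) q - q^((w+3)^2-1)) * q^(2*(w+3)+2*(w+4))|
          ≤ C2 * q^((w+5)^2-3) := by
        have hh := bd_mul hq h2 (bd_pow hq (2*(w+3)+2*(w+4)))
        simpa only [one_mul, mul_one] using bd_mono hq (by linarith) x4 hh
      have x5 : ((w+4)^2-3) + (1+2*(w+2)+3) ≤ (w+5)^2-3 := by omega
      have r5 : |(U (w+4) q - q^((w+4)^2-1)) * (q * q^(2*(w+2)) * (q^3+q^2-q))|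
          ≤ (C1*2) * q^((w+5)^2-3) := by
        have hq3 : |q^3+q^2-q| ≤ 2*q^3 := by
          rw [abs_of_nonneg (by nlinarith)]; nlinarith [ub_pow_nonneg hq 2, ub_pow_nonneg hq 3]
        have hfac := bd_mul hq (bd_mul hq (bd_self hq) (bd_pow hq (2*(w+2)))) hq3
        have hh := bd_mul hq h1 hfac
        simpa only [one_mul, mul_one] using bd_mono hq (by positivity) x5 hh
      have total := bd_add (bd_add (bd_add (bd_add r1 r2) r3) r4) r5
      exact bd_cmono hq (by linarith) total
  obtain ⟨w, rfl⟩ : ∃ w, n = w + 3 := ⟨n - 3, by omega⟩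
  obtain ⟨C, hC0, hC⟩ := refined w
  exact ⟨C, hC⟩
end
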